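/- Every concircularly recurrent pseudo-Riemannian manifold is semisymmetric: if C = R - (r/(n(n-1)))G is nowhere zero and ∇C = λ ⊗ C for a 1-form λ, then 𝓡(U,V)R = 0 for all vector fields U,V. -/
import Mathlib


/- Abstract (Koszul-style) framework for a pseudo-Riemannian manifold:
   `M` is the set of points, vector fields are maps `M → E`, smooth functions are `M → ℝ`,
   `D` is the directional-derivative action of vector fields on functions,
   `br` the Lie bracket, `conn` the Levi-Civita connection and `g` the metric,
   all given as data subject to the standard axioms (`IsLC`). -/

namespace ConcRec

variable {M : Type*} {E : Type*} [AddCommGroup E] [Module ℝ E]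

/-- The curvature operator `𝓡(u,v)w` on vector fields. -/
def rop (conn br : (M → E) → (M → E) → (M → E)) (u v w : M → E) : M → E :=
  conn u (conn v w) - conn v (conn u w) - conn (br u v) w

/-- The Riemann curvature (0,4)-tensor `R(w,x,y,z) = g(𝓡(w,x)y, z)`. -/
def rten (g : (M → E) → (M → E) → (M → ℝ))
    (conn br : (M → E) → (M → E) → (M → E)) (w x y z : M → E) : M → ℝ :=
  g (rop conn br w x y) z

/-- The curvature-like tensor `G(w,x,y,z) = g(x,y)g(w,z) - g(w,y)g(x,z)`. -/
def gten (g : (M → E) → (M → E) → (M → ℝ)) (w x y z : M → E) : M → ℝ :=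
  g x y * g w z - g w y * g x z

/-- The operator `𝓖(u,v)w = g(v,w)u - g(u,w)v`. -/
def gop (g : (M → E) → (M → E) → (M → ℝ)) (u v w : M → E) : M → E :=
  (fun p => g v w p • u p) - fun p => g u w p • v p

/-- Covariant derivative `(∇_u T)(w,x,y,z)` of a (0,4)-tensor field. -/
def cd4 (D : (M → E) → (M → ℝ) → (M → ℝ)) (conn : (M → E) → (M → E) → (M → E))
    (T : (M → E) → (M → E) → (M → E) → (M → E) → M → ℝ) (u w x y z : M → E) : M → ℝ :=
  D u (T w x y z) - T (conn u w) x y z - T w (conn u x) y z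
    - T w x (conn u y) z - T w x y (conn u z)

/-- Covariant derivative of a (0,5)-tensor field. -/
def cd5 (D : (M → E) → (M → ℝ) → (M → ℝ)) (conn : (M → E) → (M → E) → (M → E))
    (T : (M → E) → (M → E) → (M → E) → (M → E) → (M → E) → M → ℝ)
    (u v w x y z : M → E) : M → ℝ :=
  D u (T v w x y z) - T (conn u v) w x y z - T v (conn u w) x y z
    - T v w (conn u x) y z - T v w x (conn u y) z - T v w x y (conn u z)

/-- Second covariant derivative `(∇²_{u,v} T)(w,x,y,z) = (∇(∇T))(u,v,w,x,y,z)`. -/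
def scd4 (D : (M → E) → (M → ℝ) → (M → ℝ)) (conn : (M → E) → (M → E) → (M → E))
    (T : (M → E) → (M → E) → (M → E) → (M → E) → M → ℝ) (u v w x y z : M → E) : M → ℝ :=
  cd5 D conn (fun a b c d e => cd4 D conn T a b c d e) u v w x y z

/-- The curvature operator acting on a (0,4)-tensor field:
`(𝓡(u,v)T)(w,x,y,z) = (∇²_{u,v}T - ∇²_{v,u}T)(w,x,y,z)`. -/
def curv4 (D : (M → E) → (M → ℝ) → (M → ℝ)) (conn : (M → E) → (M → E) → (M → E))
    (T : (M → E) → (M → E) → (M → E) → (M → E) → M → ℝ) (u v w x y z : M → E) : M → ℝ :=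
  scd4 D conn T u v w x y z - scd4 D conn T v u w x y z

/-- Covariant derivative `(∇_u ω)(v)` of a 1-form. -/
def cd1 (D : (M → E) → (M → ℝ) → (M → ℝ)) (conn : (M → E) → (M → E) → (M → E))
    (ω : (M → E) → M → ℝ) (u v : M → E) : M → ℝ :=
  D u (ω v) - ω (conn u v)

/-- The axioms of a pseudo-Riemannian structure: `D` is a derivation action,
`br` a Lie bracket compatible with `D`, `conn` a torsion-free metric connection, and
`g` a symmetric (function-)bilinear metric. -/
def IsLC (D : (M → E) → (M → ℝ) → (M → ℝ)) (conn br : (M → E) → (M → E) → (M → E))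
    (g : (M → E) → (M → E) → (M → ℝ)) : Prop :=
  (∀ u v f, D (u + v) f = D u f + D v f) ∧
  (∀ (f : M → ℝ) u h, D (fun p => f p • u p) h = f * D u h) ∧
  (∀ u f h, D u (f + h) = D u f + D u h) ∧
  (∀ u f h, D u (f * h) = D u f * h + f * D u h) ∧
  (∀ u (c : ℝ), D u (fun _ => c) = 0) ∧
  (∀ u v f, D (br u v) f = D u (D v f) - D v (D u f)) ∧
  (∀ u v w, br u (br v w) + br v (br w u) + br w (br u v) = 0) ∧
  (∀ u v w, conn (u + v) w = conn u w + conn v w) ∧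
  (∀ u v w, conn u (v + w) = conn u v + conn u w) ∧
  (∀ (f : M → ℝ) u v, conn (fun p => f p • u p) v = fun p => f p • conn u v p) ∧
  (∀ (f : M → ℝ) u v, conn u (fun p => f p • v p) = fun p => f p • conn u v p + D u f p • v p) ∧
  (∀ u v, conn u v - conn v u = br u v) ∧
  (∀ u x y, D u (g x y) = g (conn u x) y + g x (conn u y)) ∧
  (∀ x y, g x y = g y x) ∧
  (∀ (f : M → ℝ) x y, g (fun p => f p • x p) y = f * g x y) ∧
  (∀ x y z, g (x + y) z = g x z + g y z)

/-- A 1-form: an `F`-linear map from vector fields to functions. -/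
def IsOneForm (ω : (M → E) → M → ℝ) : Prop :=
  (∀ u v, ω (u + v) = ω u + ω v) ∧ (∀ (f : M → ℝ) u, ω (fun p => f p • u p) = f * ω u)

/-- A global frame `e` together with its `g`-dual frame `einv`
(`g(einv i, e j) = δᵢⱼ`, and `e` spans pointwise). -/
def IsDualFrame (g : (M → E) → (M → E) → (M → ℝ)) {n : ℕ} (einv e : Fin n → M → E) : Prop :=
  (∀ i j, g (einv i) (e j) = fun _ => if i = j then (1 : ℝ) else 0) ∧
  (∀ (x : M → E) (p : M), x p = ∑ i, g (einv i) x p • e i p)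

/-- The Ricci tensor `S(x,z) = Trace_g ((v,w) ↦ R(v,x,w,z))`, computed in a dual frame. -/
def ricci (g : (M → E) → (M → E) → (M → ℝ)) (conn br : (M → E) → (M → E) → (M → E))
    {n : ℕ} (einv e : Fin n → M → E) (x z : M → E) : M → ℝ :=
  ∑ i, rten g conn br (einv i) x (e i) z

/-- The scalar curvature `r = Trace_g S`. -/
def scal (g : (M → E) → (M → E) → (M → ℝ)) (conn br : (M → E) → (M → E) → (M → E))
    {n : ℕ} (einv e : Fin n → M → E) : M → ℝ :=
  ∑ i, ricci g conn br einv e (einv i) (e i)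

/-- The concircular curvature tensor `C = R - (r/(n(n-1))) G`. -/
noncomputable def cten (g : (M → E) → (M → E) → (M → ℝ)) (conn br : (M → E) → (M → E) → (M → E))
    {n : ℕ} (einv e : Fin n → M → E) (w x y z : M → E) : M → ℝ :=
  fun p => rten g conn br w x y z p
    - scal g conn br einv e p / ((n : ℝ) * ((n : ℝ) - 1)) * gten g w x y z p

/-- The 1-form `μ = (1/(n(n-1)))(dr - r λ)`. -/
noncomputable def muForm (D : (M → E) → (M → ℝ) → (M → ℝ)) (g : (M → E) → (M → E) → (M → ℝ))
    (conn br : (M → E) → (M → E) → (M → E)) {n : ℕ} (einv e : Fin n → M → E)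
    (lam : (M → E) → M → ℝ) (u : M → E) : M → ℝ :=
  fun p => (D u (scal g conn br einv e) p - scal g conn br einv e p * lam u p)
    / ((n : ℝ) * ((n : ℝ) - 1))

end ConcRec

namespace ConcRec

variable {M : Type*} {E : Type*} [AddCommGroup E] [Module ℝ E]
variable {D : (M → E) → (M → ℝ) → (M → ℝ)} {conn br : (M → E) → (M → E) → (M → E)}
  {g : (M → E) → (M → E) → (M → ℝ)}

lemma D_sub (hLC : IsLC D conn br g) (u : M → E) (f h : M → ℝ) :
    D u (f - h) = D u f - D u h := by
  obtain ⟨-, -, hD3, -⟩ := hLC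
  have h1 := hD3 u (f - h) h
  rw [sub_add_cancel] at h1
  rw [h1]; abel

lemma D_addV (hLC : IsLC D conn br g) (u v : M → E) (f : M → ℝ) :
    D (u + v) f = D u f + D v f := hLC.1 u v f

lemma conn_sub₁ (hLC : IsLC D conn br g) (a b w : M → E) :
    conn (a - b) w = conn a w - conn b w := by
  obtain ⟨-, -, -, -, -, -, -, hC1, -⟩ := hLC
  have h1 := hC1 (a - b) b w
  rw [sub_add_cancel] at h1
  rw [h1]; abel

lemma conn_sub₂ (hLC : IsLC D conn br g) (u a b : M → E) :
    conn u (a - b) = conn u a - conn u b := by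
  obtain ⟨-, -, -, -, -, -, -, -, hC2, -⟩ := hLC
  have h1 := hC2 u (a - b) b
  rw [sub_add_cancel] at h1
  rw [h1]; abel

lemma g_add₁ (hLC : IsLC D conn br g) (a b z : M → E) :
    g (a + b) z = g a z + g b z := hLC.2.2.2.2.2.2.2.2.2.2.2.2.2.2.2 a b z

lemma g_symm (hLC : IsLC D conn br g) (a b : M → E) : g a b = g b a :=
  hLC.2.2.2.2.2.2.2.2.2.2.2.2.2.1 a b

lemma g_smul₁ (hLC : IsLC D conn br g) (f : M → ℝ) (a b : M → E) :
    g (fun p => f p • a p) b = f * g a b := hLC.2.2.2.2.2.2.2.2.2.2.2.2.2.2.1 f a b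

lemma g_sub₁ (hLC : IsLC D conn br g) (a b z : M → E) :
    g (a - b) z = g a z - g b z := by
  have h1 := g_add₁ hLC (a - b) b z
  rw [sub_add_cancel] at h1
  rw [h1]; abel

lemma g_add₂ (hLC : IsLC D conn br g) (z a b : M → E) :
    g z (a + b) = g z a + g z b := by
  rw [g_symm hLC, g_add₁ hLC, g_symm hLC a, g_symm hLC b]

lemma g_sub₂ (hLC : IsLC D conn br g) (z a b : M → E) :
    g z (a - b) = g z a - g z b := by
  rw [g_symm hLC, g_sub₁ hLC, g_symm hLC a, g_symm hLC b]

lemma g_smul₂ (hLC : IsLC D conn br g) (f : M → ℝ) (a b : M → E) :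
    g a (fun p => f p • b p) = f * g a b := by
  rw [g_symm hLC, g_smul₁ hLC, g_symm hLC]

lemma br_eq (hLC : IsLC D conn br g) (u v : M → E) :
    br u v = conn u v - conn v u := (hLC.2.2.2.2.2.2.2.2.2.2.2.1 u v).symm

lemma conn_eq (hLC : IsLC D conn br g) (u v : M → E) :
    conn u v = br u v + conn v u := by
  rw [br_eq hLC]; abel

lemma D_br (hLC : IsLC D conn br g) (u v : M → E) (f : M → ℝ) :
    D (br u v) f = D u (D v f) - D v (D u f) := hLC.2.2.2.2.2.1 u v f

lemma D_conn (hLC : IsLC D conn br g) (u v : M → E) (f : M → ℝ) :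
    D (conn u v) f = (D u (D v f) - D v (D u f)) + D (conn v u) f := by
  rw [conn_eq hLC u v, D_addV hLC, D_br hLC]

lemma metc (hLC : IsLC D conn br g) (u x y : M → E) :
    D u (g x y) = g (conn u x) y + g x (conn u y) := hLC.2.2.2.2.2.2.2.2.2.2.2.2.1 u x y

lemma D_mul (hLC : IsLC D conn br g) (u : M → E) (f h : M → ℝ) :
    D u (f * h) = D u f * h + f * D u h := hLC.2.2.2.1 u f h


lemma g_zero₁ (hLC : IsLC D conn br g) (z : M → E) : g 0 z = 0 := by
  have h := g_sub₁ hLC 0 0 z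
  rw [sub_zero] at h
  linear_combination h

lemma g_neg₁ (hLC : IsLC D conn br g) (a z : M → E) : g (-a) z = - g a z := by
  have h := g_sub₁ hLC 0 a z; rw [zero_sub, g_zero₁ hLC] at h; rw [h]; abel

lemma rop_skew (hLC : IsLC D conn br g) (u v w : M → E) :
    rop conn br u v w = -(rop conn br v u w) := by
  unfold rop
  simp only [br_eq hLC, conn_sub₁ hLC, conn_sub₂ hLC]
  abel

lemma rop_add₃ (hLC : IsLC D conn br g) (u v a b : M → E) :
    rop conn br u v (a + b) = rop conn br u v a + rop conn br u v b := by
  have hC2 := hLC.2.2.2.2.2.2.2.2.1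
  unfold rop
  simp only [br_eq hLC, conn_sub₁ hLC, conn_sub₂ hLC, hC2]
  abel

lemma rop_add₁ (hLC : IsLC D conn br g) (a b v w : M → E) :
    rop conn br (a + b) v w = rop conn br a v w + rop conn br b v w := by
  have hC1 := hLC.2.2.2.2.2.2.2.1
  have hC2 := hLC.2.2.2.2.2.2.2.2.1
  unfold rop
  simp only [br_eq hLC, conn_sub₁ hLC, conn_sub₂ hLC, hC1, hC2]
  abel

lemma rop_add₂ (hLC : IsLC D conn br g) (u a b w : M → E) :
    rop conn br u (a + b) w = rop conn br u a w + rop conn br u b w := by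
  rw [rop_skew hLC u (a+b), rop_add₁ hLC, rop_skew hLC a u, rop_skew hLC b u]
  abel

lemma rop_bianchi (hLC : IsLC D conn br g) (u v w : M → E) :
    rop conn br u v w + rop conn br v w u + rop conn br w u v = 0 := by
  have hC1 := hLC.2.2.2.2.2.2.2.1
  have hC2 := hLC.2.2.2.2.2.2.2.2.1
  have hJ := hLC.2.2.2.2.2.2.1 u v w
  simp only [br_eq hLC, conn_sub₁ hLC, conn_sub₂ hLC] at hJ
  unfold rop
  simp only [br_eq hLC, conn_sub₁ hLC, conn_sub₂ hLC]
  rw [← hJ]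
  abel

lemma rop_smul₃ (hLC : IsLC D conn br g) (f : M → ℝ) (u v w : M → E) :
    rop conn br u v (fun p => f p • w p) = fun p => f p • rop conn br u v w p := by
  have hC2 := hLC.2.2.2.2.2.2.2.2.1
  have hC4 := hLC.2.2.2.2.2.2.2.2.2.2.1
  have e1 : ∀ (a b : M → E) (x : M → E),
      conn a (conn b (fun p => f p • x p)) =
      fun p => f p • conn a (conn b x) p + D a f p • conn b x p
        + (D b f p • conn a x p + D a (D b f) p • x p) := by
    intro a b x
    rw [hC4 f b x]
    show conn a ((fun p => f p • conn b x p) + (fun p => D b f p • x p)) = _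
    rw [hC2, hC4, hC4]
    rfl
  have e3 : conn (br u v) (fun p => f p • w p)
      = fun p => f p • conn (br u v) w p + D (br u v) f p • w p := hC4 f (br u v) w
  unfold rop
  rw [e1 u v w, e1 v u w, e3]
  funext p
  have hb := congrFun (D_br hLC u v f) p
  simp only [Pi.sub_apply] at hb ⊢
  rw [hb]
  module

lemma rop_smul₁ (hLC : IsLC D conn br g) (f : M → ℝ) (u v w : M → E) :
    rop conn br (fun p => f p • u p) v w = fun p => f p • rop conn br u v w p := by
  have hC2 := hLC.2.2.2.2.2.2.2.2.1
  have hC3 := hLC.2.2.2.2.2.2.2.2.2.1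
  have hC4 := hLC.2.2.2.2.2.2.2.2.2.2.1
  have e1 : conn (fun p => f p • u p) (conn v w) = fun p => f p • conn u (conn v w) p :=
    hC3 f u (conn v w)
  have e2 : conn v (conn (fun p => f p • u p) w)
      = fun p => f p • conn v (conn u w) p + D v f p • conn u w p := by
    rw [hC3 f u w, hC4]
  have e3 : conn (br (fun p => f p • u p) v) w
      = (fun p => f p • conn (conn u v) w p) -
        ((fun p => f p • conn (conn v u) w p) + (fun p => D v f p • conn u w p)) := by
    rw [br_eq hLC, hC3 f u v, hC4 f v u]
    show conn ((fun p => f p • conn u v p) -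
      ((fun p => f p • conn v u p) + (fun p => D v f p • u p))) w = _
    rw [conn_sub₁ hLC]
    rw [hLC.2.2.2.2.2.2.2.1 (fun p => f p • conn v u p) (fun p => D v f p • u p) w,
      hC3, hC3, hC3]
  unfold rop
  rw [e1, e2, e3]
  simp only [br_eq hLC, conn_sub₁ hLC]
  funext p
  simp only [Pi.sub_apply, Pi.add_apply]
  module

lemma rop_smul₂ (hLC : IsLC D conn br g) (f : M → ℝ) (u v w : M → E) :
    rop conn br u (fun p => f p • v p) w = fun p => f p • rop conn br u v w p := by
  rw [rop_skew hLC u _ w, rop_smul₁ hLC f v u w]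
  funext p
  simp only [Pi.neg_apply]
  rw [congrFun (rop_skew hLC v u w) p]
  simp

lemma rt_add₄ (hLC : IsLC D conn br g) (u v w a b : M → E) :
    rten g conn br u v w (a + b) = rten g conn br u v w a + rten g conn br u v w b :=
  g_add₂ hLC _ a b

lemma rt_smul₄ (hLC : IsLC D conn br g) (f : M → ℝ) (u v w z : M → E) :
    rten g conn br u v w (fun p => f p • z p) = f * rten g conn br u v w z :=
  g_smul₂ hLC f _ z

lemma rt_add₁ (hLC : IsLC D conn br g) (a b v w z : M → E) :
    rten g conn br (a + b) v w z = rten g conn br a v w z + rten g conn br b v w z := by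
  unfold rten; rw [rop_add₁ hLC, g_add₁ hLC]

lemma rt_add₂ (hLC : IsLC D conn br g) (u a b w z : M → E) :
    rten g conn br u (a + b) w z = rten g conn br u a w z + rten g conn br u b w z := by
  unfold rten; rw [rop_add₂ hLC, g_add₁ hLC]

lemma rt_add₃ (hLC : IsLC D conn br g) (u v a b z : M → E) :
    rten g conn br u v (a + b) z = rten g conn br u v a z + rten g conn br u v b z := by
  unfold rten; rw [rop_add₃ hLC, g_add₁ hLC]

lemma rt_smul₁ (hLC : IsLC D conn br g) (f : M → ℝ) (u v w z : M → E) :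
    rten g conn br (fun p => f p • u p) v w z = f * rten g conn br u v w z := by
  unfold rten; rw [rop_smul₁ hLC, g_smul₁ hLC]

lemma rt_smul₂ (hLC : IsLC D conn br g) (f : M → ℝ) (u v w z : M → E) :
    rten g conn br u (fun p => f p • v p) w z = f * rten g conn br u v w z := by
  unfold rten; rw [rop_smul₂ hLC, g_smul₁ hLC]

lemma rt_smul₃ (hLC : IsLC D conn br g) (f : M → ℝ) (u v w z : M → E) :
    rten g conn br u v (fun p => f p • w p) z = f * rten g conn br u v w z := by
  unfold rten; rw [rop_smul₃ hLC, g_smul₁ hLC]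

lemma rt_skew12 (hLC : IsLC D conn br g) (u v y z : M → E) :
    rten g conn br u v y z = -(rten g conn br v u y z) := by
  unfold rten; rw [rop_skew hLC, g_neg₁ hLC]

lemma rt_diag (hLC : IsLC D conn br g) (u v y : M → E) :
    g (rop conn br u v y) y = 0 := by
  have hD3 := hLC.2.2.1
  have dv : D v (g y y) = g (conn v y) y + g (conn v y) y := by
    rw [metc hLC, g_symm hLC y]
  have du : D u (g y y) = g (conn u y) y + g (conn u y) y := by
    rw [metc hLC, g_symm hLC y]
  have duv : D u (D v (g y y)) = (g (conn u (conn v y)) y + g (conn v y) (conn u y))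
      + (g (conn u (conn v y)) y + g (conn v y) (conn u y)) := by
    rw [dv, hD3, metc hLC]
  have dvu : D v (D u (g y y)) = (g (conn v (conn u y)) y + g (conn u y) (conn v y))
      + (g (conn v (conn u y)) y + g (conn u y) (conn v y)) := by
    rw [du, hD3, metc hLC]
  have dbr : g (conn (br u v) y) y + g y (conn (br u v) y)
      = D u (D v (g y y)) - D v (D u (g y y)) := by
    rw [← metc hLC, D_br hLC]
  unfold rop
  rw [g_sub₁ hLC, g_sub₁ hLC]
  funext p
  have h1 := congrFun duv p
  have h2 := congrFun dvu p
  have h3 := congrFun dbr p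
  have h4 := congrFun (g_symm hLC y (conn (br u v) y)) p
  have h5 := congrFun (g_symm hLC (conn v y) (conn u y)) p
  simp only [Pi.add_apply, Pi.sub_apply, Pi.zero_apply] at h1 h2 h3 h4 h5 ⊢
  linarith

lemma rt_skew34 (hLC : IsLC D conn br g) (w x y z : M → E) :
    rten g conn br w x y z = -(rten g conn br w x z y) := by
  have h := rt_diag hLC w x (y + z)
  rw [rop_add₃ hLC, g_add₁ hLC, g_add₂ hLC, g_add₂ hLC] at h
  have h1 := rt_diag hLC w x y
  have h2 := rt_diag hLC w x z
  unfold rten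
  funext p
  have := congrFun h p
  have e1 := congrFun h1 p
  have e2 := congrFun h2 p
  have e3 := congrFun (g_symm hLC (rop conn br w x z) y) p
  simp only [Pi.add_apply, Pi.neg_apply, Pi.zero_apply] at this e1 e2 e3 ⊢
  linarith

lemma rt_bianchi (hLC : IsLC D conn br g) (u v w z : M → E) :
    rten g conn br u v w z + rten g conn br v w u z + rten g conn br w u v z = 0 := by
  unfold rten
  rw [← g_add₁ hLC, ← g_add₁ hLC, rop_bianchi hLC, g_zero₁ hLC]

lemma rt_pairsym (hLC : IsLC D conn br g) (w x y z : M → E) :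
    rten g conn br w x y z = rten g conn br y z w x := by
  funext p
  have B1 := congrFun (rt_bianchi hLC w x y z) p
  have B2 := congrFun (rt_bianchi hLC x y z w) p
  have B3 := congrFun (rt_bianchi hLC y z w x) p
  have B4 := congrFun (rt_bianchi hLC z w x y) p
  have sa := congrFun (rt_skew34 hLC w x z y) p
  have sb := congrFun (rt_skew34 hLC y z x w) p
  have sc := congrFun (rt_skew34 hLC x y z w) p
  have sd := congrFun (rt_skew34 hLC z w x y) p
  have se1 := congrFun (rt_skew34 hLC y w z x) p
  have se2 := congrFun (rt_skew12 hLC w y z x) p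
  have sf1 := congrFun (rt_skew34 hLC z x w y) p
  have sf2 := congrFun (rt_skew12 hLC x z w y) p
  simp only [Pi.add_apply, Pi.neg_apply, Pi.zero_apply] at *
  linarith

lemma ricci4 (hLC : IsLC D conn br g)
    (T : (M → E) → (M → E) → (M → E) → (M → E) → M → ℝ)
    (hT1 : ∀ a b x y z, T (a + b) x y z = T a x y z + T b x y z)
    (hT2 : ∀ w a b y z, T w (a + b) y z = T w a y z + T w b y z)
    (hT3 : ∀ w x a b z, T w x (a + b) z = T w x a z + T w x b z)
    (hT4 : ∀ w x y a b, T w x y (a + b) = T w x y a + T w x y b)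
    (u v w x y z : M → E) :
    curv4 D conn T u v w x y z =
      -(T (rop conn br u v w) x y z + T w (rop conn br u v x) y z
        + T w x (rop conn br u v y) z + T w x y (rop conn br u v z)) := by
  have hDsub := D_sub hLC
  have hS1 : ∀ (a b x y z : M → E), T (a - b) x y z = T a x y z - T b x y z := by
    intro a b x y z
    have h := hT1 (a - b) b x y z
    rw [sub_add_cancel] at h
    linear_combination -h
  have hS2 : ∀ (w a b y z : M → E), T w (a - b) y z = T w a y z - T w b y z := by
    intro w a b y z
    have h := hT2 w (a - b) b y z
    rw [sub_add_cancel] at h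
    linear_combination -h
  have hS3 : ∀ (w x a b z : M → E), T w x (a - b) z = T w x a z - T w x b z := by
    intro w x a b z
    have h := hT3 w x (a - b) b z
    rw [sub_add_cancel] at h
    linear_combination -h
  have hS4 : ∀ (w x y a b : M → E), T w x y (a - b) = T w x y a - T w x y b := by
    intro w x y a b
    have h := hT4 w x y (a - b) b
    rw [sub_add_cancel] at h
    linear_combination -h
  simp only [curv4, scd4, cd5, cd4, rop, br_eq hLC, conn_sub₁ hLC]
  simp only [hDsub, hS1, hS2, hS3, hS4]
  rw [D_conn hLC u v (T w x y z)]
  ring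

lemma P_zero (P : (M → E) → M → ℝ)
    (hPa : ∀ a b, P (a + b) = P a + P b) : P (fun _ => (0:E)) = 0 := by
  have h := hPa (fun _ => (0:E)) (fun _ => (0:E))
  have h2 : ((fun _ => (0:E)) + (fun _ => (0:E)) : M → E) = (fun _ => (0:E)) := by
    funext p; simp [Pi.add_apply]
  rw [h2] at h
  linear_combination -h

lemma expand_sum (P : (M → E) → M → ℝ)
    (hPa : ∀ a b, P (a + b) = P a + P b)
    (hPs : ∀ (f : M → ℝ) a, P (fun p => f p • a p) = f * P a)
    {k : ℕ} (s : Finset (Fin k)) (c : Fin k → M → ℝ) (a : Fin k → M → E) :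
    P (fun p => ∑ i ∈ s, c i p • a i p) = ∑ i ∈ s, c i * P (a i) := by
  classical
  induction s using Finset.induction with
  | empty =>
    simp only [Finset.sum_empty]
    exact P_zero P hPa
  | @insert i s hi ih =>
    simp only [Finset.sum_insert hi]
    rw [show P (fun p => c i p • a i p + ∑ j ∈ s, c j p • a j p)
        = P ((fun p => c i p • a i p) + (fun p => ∑ j ∈ s, c j p • a j p)) from rfl]
    rw [hPa, hPs, ih]

lemma frame_expand {k : ℕ} {einv e : Fin k → M → E} (hframe : IsDualFrame g einv e)
    (P : (M → E) → M → ℝ)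
    (hPa : ∀ a b, P (a + b) = P a + P b)
    (hPs : ∀ (f : M → ℝ) a, P (fun p => f p • a p) = f * P a)
    (x : M → E) :
    P x = ∑ i, g (einv i) x * P (e i) := by
  have hx : x = fun p => ∑ i, g (einv i) x p • e i p := funext fun p => hframe.2 x p
  conv_lhs => rw [hx]
  exact expand_sum P hPa hPs Finset.univ _ _

lemma trace_swap (hLC : IsLC D conn br g) {k : ℕ} {einv e : Fin k → M → E}
    (hframe : IsDualFrame g einv e)
    (F : (M → E) → (M → E) → M → ℝ)
    (hFa1 : ∀ a b c, F (a + b) c = F a c + F b c)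
    (hFs1 : ∀ (f : M → ℝ) a c, F (fun p => f p • a p) c = f * F a c)
    (hFa2 : ∀ c a b, F c (a + b) = F c a + F c b)
    (hFs2 : ∀ (f : M → ℝ) c a, F c (fun p => f p • a p) = f * F c a) :
    ∑ i, F (einv i) (e i) = ∑ i, F (e i) (einv i) := by
  have h1 : ∀ i, F (einv i) (e i) = ∑ j, g (einv j) (einv i) * F (e j) (e i) := fun i =>
    frame_expand hframe (fun a => F a (e i)) (fun a b => hFa1 a b (e i))
      (fun f a => hFs1 f a (e i)) (einv i)
  have h2 : ∀ i, F (e i) (einv i) = ∑ j, g (einv j) (einv i) * F (e i) (e j) := fun i =>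
    frame_expand hframe (fun b => F (e i) b) (hFa2 (e i)) (hFs2 · (e i)) (einv i)
  calc ∑ i, F (einv i) (e i) = ∑ i, ∑ j, g (einv j) (einv i) * F (e j) (e i) :=
        Finset.sum_congr rfl fun i _ => h1 i
    _ = ∑ i, ∑ j, g (einv i) (einv j) * F (e i) (e j) := Finset.sum_comm
    _ = ∑ i, ∑ j, g (einv j) (einv i) * F (e i) (e j) := by
        apply Finset.sum_congr rfl; intro i _
        apply Finset.sum_congr rfl; intro j _
        rw [g_symm hLC (einv j) (einv i)]
    _ = ∑ i, F (e i) (einv i) := Finset.sum_congr rfl fun i _ => (h2 i).symm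
  

lemma D_zero (hLC : IsLC D conn br g) (u : M → E) : D u (0 : M → ℝ) = 0 :=
  hLC.2.2.2.2.1 u 0

lemma D_neg (hLC : IsLC D conn br g) (u : M → E) (f : M → ℝ) : D u (-f) = -(D u f) := by
  have h := D_sub hLC u 0 f
  rw [zero_sub] at h
  rw [h, D_zero hLC, zero_sub]

lemma D_add (hLC : IsLC D conn br g) (u : M → E) (f h : M → ℝ) :
    D u (f + h) = D u f + D u h := hLC.2.2.1 u f h

lemma curv4_sub (hLC : IsLC D conn br g)
    (T1 T2 : (M → E) → (M → E) → (M → E) → (M → E) → M → ℝ) (u v w x y z : M → E) :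
    curv4 D conn (fun a b c d => T1 a b c d - T2 a b c d) u v w x y z
      = curv4 D conn T1 u v w x y z - curv4 D conn T2 u v w x y z := by
  simp only [curv4, scd4, cd5, cd4]
  simp only [D_sub hLC]
  ring

lemma curv4_fG_zero (hLC : IsLC D conn br g) (f0 : M → ℝ) (u v w x y z : M → E) :
    curv4 D conn (fun a b c d => f0 * gten g a b c d) u v w x y z = 0 := by
  simp only [curv4, scd4, cd5, cd4, gten]
  simp only [D_sub hLC, D_add hLC, D_neg hLC, D_mul hLC, metc hLC]
  rw [D_conn hLC u v f0]
  ring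

lemma curv4_cten (hLC : IsLC D conn br g) {k : ℕ} (einv e : Fin k → M → E)
    (lam : (M → E) → M → ℝ) (hlam : IsOneForm lam)
    (hrec : ∀ u w x y z, cd4 D conn (cten g conn br einv e) u w x y z
      = lam u * cten g conn br einv e w x y z) (u v w x y z : M → E) :
    curv4 D conn (cten g conn br einv e) u v w x y z
      = (D u (lam v) - D v (lam u) - lam (br u v)) * cten g conn br einv e w x y z := by
  have hu := hrec u w x y z
  have hv := hrec v w x y z
  simp only [cd4] at hu hv
  have hbr' : lam (conn u v) = lam (br u v) + lam (conn v u) := by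
    rw [conn_eq hLC u v, hlam.1]
  simp only [curv4, scd4, cd5, hrec]
  simp only [D_mul hLC]
  rw [hbr']
  linear_combination lam v * hu - lam u * hv

lemma ct_pairsym (hLC : IsLC D conn br g) {k : ℕ} (einv e : Fin k → M → E)
    (w x y z : M → E) :
    cten g conn br einv e w x y z = cten g conn br einv e y z w x := by
  funext p
  simp only [cten, gten, Pi.sub_apply, Pi.mul_apply]
  rw [congrFun (rt_pairsym hLC w x y z) p, congrFun (g_symm hLC x y) p,
    congrFun (g_symm hLC w z) p, congrFun (g_symm hLC w y) p, congrFun (g_symm hLC x z) p]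
  ring

lemma fexp1 (hLC : IsLC D conn br g) {k : ℕ} {einv e : Fin k → M → E}
    (hframe : IsDualFrame g einv e) (u v w x y z : M → E) :
    rten g conn br (rop conn br u v w) x y z
      = ∑ i, rten g conn br u v w (einv i) * rten g conn br (e i) x y z := by
  have h := frame_expand hframe (fun a => rten g conn br a x y z)
    (fun a b => rt_add₁ hLC a b x y z) (fun f a => rt_smul₁ hLC f a x y z)
    (rop conn br u v w)
  rw [h]
  apply Finset.sum_congr rfl; intro i _
  rw [g_symm hLC (einv i) (rop conn br u v w)]; rfl

lemma fexp2 (hLC : IsLC D conn br g) {k : ℕ} {einv e : Fin k → M → E}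
    (hframe : IsDualFrame g einv e) (u v w x y z : M → E) :
    rten g conn br w (rop conn br u v x) y z
      = ∑ i, rten g conn br u v x (einv i) * rten g conn br w (e i) y z := by
  have h := frame_expand hframe (fun a => rten g conn br w a y z)
    (fun a b => rt_add₂ hLC w a b y z) (fun f a => rt_smul₂ hLC f w a y z)
    (rop conn br u v x)
  rw [h]
  apply Finset.sum_congr rfl; intro i _
  rw [g_symm hLC (einv i) (rop conn br u v x)]; rfl

lemma fexp3 (hLC : IsLC D conn br g) {k : ℕ} {einv e : Fin k → M → E}
    (hframe : IsDualFrame g einv e) (u v w x y z : M → E) :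
    rten g conn br w x (rop conn br u v y) z
      = ∑ i, rten g conn br u v y (einv i) * rten g conn br w x (e i) z := by
  have h := frame_expand hframe (fun a => rten g conn br w x a z)
    (fun a b => rt_add₃ hLC w x a b z) (fun f a => rt_smul₃ hLC f w x a z)
    (rop conn br u v y)
  rw [h]
  apply Finset.sum_congr rfl; intro i _
  rw [g_symm hLC (einv i) (rop conn br u v y)]; rfl

lemma fexp4 (hLC : IsLC D conn br g) {k : ℕ} {einv e : Fin k → M → E}
    (hframe : IsDualFrame g einv e) (u v w x y z : M → E) :
    rten g conn br w x y (rop conn br u v z)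
      = ∑ i, rten g conn br u v z (einv i) * rten g conn br w x y (e i) := by
  have h := frame_expand hframe (fun a => rten g conn br w x y a)
    (fun a b => rt_add₄ hLC w x y a b) (fun f a => rt_smul₄ hLC f w x y a)
    (rop conn br u v z)
  rw [h]
  apply Finset.sum_congr rfl; intro i _
  rw [g_symm hLC (einv i) (rop conn br u v z)]; rfl

lemma tsw4 (hLC : IsLC D conn br g) {k : ℕ} {einv e : Fin k → M → E}
    (hframe : IsDualFrame g einv e) (a b c x y z : M → E) :
    ∑ i, rten g conn br a b c (einv i) * rten g conn br x y z (e i)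
      = ∑ i, rten g conn br a b c (e i) * rten g conn br x y z (einv i) :=
  trace_swap hLC hframe (fun s t => rten g conn br a b c s * rten g conn br x y z t)
    (fun s s' t => by simp only [rt_add₄ hLC]; ring)
    (fun f s t => by simp only [rt_smul₄ hLC]; ring)
    (fun s t t' => by simp only [rt_add₄ hLC]; ring)
    (fun f s t => by simp only [rt_smul₄ hLC]; ring)

lemma tsw3 (hLC : IsLC D conn br g) {k : ℕ} {einv e : Fin k → M → E}
    (hframe : IsDualFrame g einv e) (a b c x y z : M → E) :
    ∑ i, rten g conn br a b c (einv i) * rten g conn br x y (e i) z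
      = ∑ i, rten g conn br a b c (e i) * rten g conn br x y (einv i) z :=
  trace_swap hLC hframe (fun s t => rten g conn br a b c s * rten g conn br x y t z)
    (fun s s' t => by simp only [rt_add₄ hLC]; ring)
    (fun f s t => by simp only [rt_smul₄ hLC]; ring)
    (fun s t t' => by simp only [rt_add₃ hLC]; ring)
    (fun f s t => by simp only [rt_smul₃ hLC]; ring)

lemma tsw2 (hLC : IsLC D conn br g) {k : ℕ} {einv e : Fin k → M → E}
    (hframe : IsDualFrame g einv e) (a b c x y z : M → E) :
    ∑ i, rten g conn br a b c (einv i) * rten g conn br x (e i) y z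
      = ∑ i, rten g conn br a b c (e i) * rten g conn br x (einv i) y z :=
  trace_swap hLC hframe (fun s t => rten g conn br a b c s * rten g conn br x t y z)
    (fun s s' t => by simp only [rt_add₄ hLC]; ring)
    (fun f s t => by simp only [rt_smul₄ hLC]; ring)
    (fun s t t' => by simp only [rt_add₂ hLC]; ring)
    (fun f s t => by simp only [rt_smul₂ hLC]; ring)

lemma tsw1 (hLC : IsLC D conn br g) {k : ℕ} {einv e : Fin k → M → E}
    (hframe : IsDualFrame g einv e) (a b c x y z : M → E) :
    ∑ i, rten g conn br a b c (einv i) * rten g conn br (e i) x y z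
      = ∑ i, rten g conn br a b c (e i) * rten g conn br (einv i) x y z :=
  trace_swap hLC hframe (fun s t => rten g conn br a b c s * rten g conn br t x y z)
    (fun s s' t => by simp only [rt_add₄ hLC]; ring)
    (fun f s t => by simp only [rt_smul₄ hLC]; ring)
    (fun s t t' => by simp only [rt_add₁ hLC]; ring)
    (fun f s t => by simp only [rt_smul₁ hLC]; ring)

lemma pair1 (hLC : IsLC D conn br g) {k : ℕ} {einv e : Fin k → M → E}
    (hframe : IsDualFrame g einv e) (u v w x y z : M → E) :
    (∑ i, rten g conn br u v w (einv i) * rten g conn br (e i) x y z)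
      + (∑ i, rten g conn br y z x (einv i) * rten g conn br u v w (e i)) = 0 := by
  rw [tsw4 hLC hframe y z x u v w, ← Finset.sum_add_distrib]
  apply Finset.sum_eq_zero; intro i _
  rw [rt_pairsym hLC (e i) x y z, rt_skew34 hLC y z (e i) x]
  ring

lemma pair2 (hLC : IsLC D conn br g) {k : ℕ} {einv e : Fin k → M → E}
    (hframe : IsDualFrame g einv e) (u v w x y z : M → E) :
    (∑ i, rten g conn br u v x (einv i) * rten g conn br w (e i) y z)
      + (∑ i, rten g conn br y z w (einv i) * rten g conn br u v (e i) x) = 0 := by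
  rw [tsw3 hLC hframe y z w u v x, ← Finset.sum_add_distrib]
  apply Finset.sum_eq_zero; intro i _
  rw [rt_pairsym hLC w (e i) y z, rt_skew34 hLC u v (einv i) x]
  ring

lemma pair3 (hLC : IsLC D conn br g) {k : ℕ} {einv e : Fin k → M → E}
    (hframe : IsDualFrame g einv e) (u v w x y z : M → E) :
    (∑ i, rten g conn br u v y (einv i) * rten g conn br w x (e i) z)
      + (∑ i, rten g conn br w x z (einv i) * rten g conn br y (e i) u v) = 0 := by
  rw [tsw2 hLC hframe w x z y u v, ← Finset.sum_add_distrib]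
  apply Finset.sum_eq_zero; intro i _
  rw [rt_pairsym hLC y (einv i) u v, rt_skew34 hLC w x (e i) z]
  ring

lemma pair4 (hLC : IsLC D conn br g) {k : ℕ} {einv e : Fin k → M → E}
    (hframe : IsDualFrame g einv e) (u v w x y z : M → E) :
    (∑ i, rten g conn br u v z (einv i) * rten g conn br w x y (e i))
      + (∑ i, rten g conn br w x y (einv i) * rten g conn br (e i) z u v) = 0 := by
  rw [tsw1 hLC hframe w x y z u v, ← Finset.sum_add_distrib]
  apply Finset.sum_eq_zero; intro i _
  rw [rt_pairsym hLC (einv i) z u v, rt_skew34 hLC u v (einv i) z]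
  ring

lemma pair5 (hLC : IsLC D conn br g) {k : ℕ} {einv e : Fin k → M → E}
    (hframe : IsDualFrame g einv e) (u v w x y z : M → E) :
    (∑ i, rten g conn br w x u (einv i) * rten g conn br y z (e i) v)
      + (∑ i, rten g conn br y z v (einv i) * rten g conn br u (e i) w x) = 0 := by
  rw [tsw2 hLC hframe y z v u w x, ← Finset.sum_add_distrib]
  apply Finset.sum_eq_zero; intro i _
  rw [rt_pairsym hLC u (einv i) w x, rt_skew34 hLC y z (e i) v]
  ring

lemma pair6 (hLC : IsLC D conn br g) {k : ℕ} {einv e : Fin k → M → E}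
    (hframe : IsDualFrame g einv e) (u v w x y z : M → E) :
    (∑ i, rten g conn br w x v (einv i) * rten g conn br y z u (e i))
      + (∑ i, rten g conn br y z u (einv i) * rten g conn br (e i) v w x) = 0 := by
  rw [tsw1 hLC hframe y z u v w x, ← Finset.sum_add_distrib]
  apply Finset.sum_eq_zero; intro i _
  rw [rt_pairsym hLC (einv i) v w x, rt_skew34 hLC w x (einv i) v]
  ring

lemma curv4_rten (hLC : IsLC D conn br g) {k : ℕ} (einv e : Fin k → M → E)
    (lam : (M → E) → M → ℝ) (hlam : IsOneForm lam)
    (hrec : ∀ u w x y z, cd4 D conn (cten g conn br einv e) u w x y z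
      = lam u * cten g conn br einv e w x y z) (u v w x y z : M → E) :
    curv4 D conn (rten g conn br) u v w x y z
      = (D u (lam v) - D v (lam u) - lam (br u v)) * cten g conn br einv e w x y z := by
  have hR : rten g conn br = (fun a b c d => cten g conn br einv e a b c d
      - (fun a' b' c' d' => (fun p => -(scal g conn br einv e p / ((k:ℝ) * ((k:ℝ) - 1))))
          * gten g a' b' c' d') a b c d) := by
    funext a b c d p
    simp only [cten, Pi.sub_apply, Pi.mul_apply, Pi.neg_apply]
    ring
  rw [hR, curv4_sub hLC (cten g conn br einv e)
    (fun a' b' c' d' => (fun p => -(scal g conn br einv e p / ((k:ℝ) * ((k:ℝ) - 1))))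
      * gten g a' b' c' d') u v w x y z,
    curv4_cten hLC einv e lam hlam hrec u v w x y z,
    curv4_fG_zero hLC (fun p => -(scal g conn br einv e p / ((k:ℝ) * ((k:ℝ) - 1)))) u v w x y z,
    sub_zero]

lemma walker (hLC : IsLC D conn br g) {k : ℕ} {einv e : Fin k → M → E}
    (hframe : IsDualFrame g einv e)
    (lam : (M → E) → M → ℝ) (hlam : IsOneForm lam)
    (hrec : ∀ u w x y z, cd4 D conn (cten g conn br einv e) u w x y z
      = lam u * cten g conn br einv e w x y z) (u v w x y z : M → E) :
    (D u (lam v) - D v (lam u) - lam (br u v)) * cten g conn br einv e w x y z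
      + (D w (lam x) - D x (lam w) - lam (br w x)) * cten g conn br einv e y z u v
      + (D y (lam z) - D z (lam y) - lam (br y z)) * cten g conn br einv e u v w x = 0 := by
  have e1 := curv4_rten hLC einv e lam hlam hrec u v w x y z
  have e2 := curv4_rten hLC einv e lam hlam hrec w x y z u v
  have e3 := curv4_rten hLC einv e lam hlam hrec y z u v w x
  rw [ricci4 hLC (rten g conn br) (rt_add₁ hLC) (rt_add₂ hLC) (rt_add₃ hLC) (rt_add₄ hLC)
      u v w x y z,
    fexp1 hLC hframe, fexp2 hLC hframe, fexp3 hLC hframe, fexp4 hLC hframe] at e1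
  rw [ricci4 hLC (rten g conn br) (rt_add₁ hLC) (rt_add₂ hLC) (rt_add₃ hLC) (rt_add₄ hLC)
      w x y z u v,
    fexp1 hLC hframe, fexp2 hLC hframe, fexp3 hLC hframe, fexp4 hLC hframe] at e2
  rw [ricci4 hLC (rten g conn br) (rt_add₁ hLC) (rt_add₂ hLC) (rt_add₃ hLC) (rt_add₄ hLC)
      y z u v w x,
    fexp1 hLC hframe, fexp2 hLC hframe, fexp3 hLC hframe, fexp4 hLC hframe] at e3
  have p1 := pair1 hLC hframe u v w x y z
  have p2 := pair2 hLC hframe u v w x y z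
  have p3 := pair3 hLC hframe u v w x y z
  have p4 := pair4 hLC hframe u v w x y z
  have p5 := pair5 hLC hframe u v w x y z
  have p6 := pair6 hLC hframe u v w x y z
  linear_combination -e1 - e2 - e3 - p1 - p2 - p3 - p4 - p5 - p6

end ConcRec

open ConcRec in
/-- Step 2: every concircularly recurrent manifold is semisymmetric: `𝓡(u,v)R = 0`. -/
theorem concircularly_recurrent_is_semisymmetric
    {M : Type*} {E : Type*} [AddCommGroup E] [Module ℝ E]
    (D : (M → E) → (M → ℝ) → (M → ℝ)) (conn br : (M → E) → (M → E) → (M → E))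
    (g : (M → E) → (M → E) → (M → ℝ)) (hLC : IsLC D conn br g)
    {n : ℕ} (hn : 3 ≤ n) (einv e : Fin n → M → E) (hframe : IsDualFrame g einv e)
    (lam : (M → E) → M → ℝ) (hlam : IsOneForm lam)
    (hC0 : ∀ p : M, ∃ w x y z, cten g conn br einv e w x y z p ≠ 0)
    (hrec : ∀ u w x y z, cd4 D conn (cten g conn br einv e) u w x y z
      = lam u * cten g conn br einv e w x y z) :
    ∀ u v w x y z, curv4 D conn (rten g conn br) u v w x y z = 0 := by
  intro u v w x y z
  rw [curv4_rten hLC einv e lam hlam hrec u v w x y z]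
  funext p
  simp only [Pi.mul_apply, Pi.zero_apply]
  have hK : ∀ s t q r a b : M → E,
      (D s (lam t) - D t (lam s) - lam (br s t)) p * cten g conn br einv e q r a b p
        + (D q (lam r) - D r (lam q) - lam (br q r)) p * cten g conn br einv e a b s t p
        + (D a (lam b) - D b (lam a) - lam (br a b)) p * cten g conn br einv e s t q r p
        = 0 := by
    intro s t q r a b
    have h := congrFun (walker hLC hframe lam hlam hrec s t q r a b) p
    simpa only [Pi.add_apply, Pi.mul_apply, Pi.zero_apply] using h
  have hsym : ∀ a b c d : M → E,
      cten g conn br einv e a b c d p = cten g conn br einv e c d a b p :=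
    fun a b c d => congrFun (ct_pairsym hLC einv e a b c d) p
  by_cases hA : (D u (lam v) - D v (lam u) - lam (br u v)) p = 0
  · rw [hA, zero_mul]
  · exfalso
    have hBuv : ∀ q r : M → E, cten g conn br einv e u v q r p = 0 := by
      intro q r
      have h1 := hK u v u v u v
      have hz : cten g conn br einv e u v u v p = 0 := by
        have h1' : (D u (lam v) - D v (lam u) - lam (br u v)) p
            * cten g conn br einv e u v u v p = 0 := by linarith
        exact (mul_eq_zero.mp h1').resolve_left hA
      have h2 := hK u v q r u v
      rw [hsym q r u v, hz] at h2
      have h2' : (D u (lam v) - D v (lam u) - lam (br u v)) p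
          * cten g conn br einv e u v q r p = 0 := by linarith
      exact (mul_eq_zero.mp h2').resolve_left hA
    obtain ⟨w', x', y', z', hne⟩ := hC0 p
    apply hne
    have h3 := hK w' x' y' z' u v
    rw [hsym y' z' u v, hBuv y' z', hBuv w' x'] at h3
    have h3' : (D u (lam v) - D v (lam u) - lam (br u v)) p
        * cten g conn br einv e w' x' y' z' p = 0 := by linarith
    exact (mul_eq_zero.mp h3').resolve_left hA
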